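/- Let γ > 0 and μ ∈ ℝ, and let ν be the Lévy probability measure on ℝ supported on (μ, ∞) with density f(x) = (γ/√(2π))·(x − μ)^{−3/2}·exp( −γ²/(2(x − μ)) ) for x > μ. Then f is a probability density, and for all q ∈ ℝ its characteristic function satisfies ∫_μ^∞ exp(iqx)·f(x) dx = exp( iμq − γ·|q|^{1/2}·(1 − i·sign(q)) ); i.e., the Lévy(γ,μ) distribution is the totally skewed α-stable distribution S_{1/2}(β = 1, γ, μ). -/

import Mathlib

open MeasureTheory

/-- The Lévy(γ, μ) density on `(μ, ∞)`. -/
noncomputable def levyDensity (γ μ x : ℝ) : ℝ :=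
  γ / Real.sqrt (2 * Real.pi) * (x - μ) ^ (-(3 / 2 : ℝ)) * Real.exp (-γ ^ 2 / (2 * (x - μ)))

/-!
After translating by `μ`, put `Φ(γ) = ∫₀^∞ e^{iqx} f_γ(x) dx`, where `f_γ = levyDensity γ 0` is
`γ / √(2π)` times the inverse-gamma kernel `x^{-3/2} e^{-a/x}` at `a = γ²/2`. Differentiating under
the integral in `a` lowers the exponent by one, and one integration by parts in `x` relates three
consecutive exponents; together they give `Φ'' = -2iq Φ = λ² Φ` with `λ = √q (1 - i)` for `q > 0`.
Since `‖Φ‖ ≤ 1` and the scaling `f_γ(x) = γ⁻² f_1(x / γ²)` gives `Φ(γ) → 1` as `γ → 0⁺`, the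
decaying solution `e^{-λγ}` is the only admissible one. Conjugation gives `q < 0`, and `q = 0` is
the normalisation `∫ f_γ = Γ(1/2) / √π = 1`.
-/

open Set Filter Topology

namespace Levy

lemma setIntegral_Ioi_eq_comp_add {E : Type*} [NormedAddCommGroup E] [NormedSpace ℝ E]
    (f : ℝ → E) (μ : ℝ) : ∫ x in Ioi μ, f x = ∫ x in Ioi 0, f (x + μ) := by
  rw [← (measurePreserving_add_right volume μ).setIntegral_preimage_emb
    (MeasurableEquiv.addRight μ).measurableEmbedding f (Ioi μ)]
  congr 2
  ext x
  simp

noncomputable def invGammaKernel (p a x : ℝ) : ℝ := x ^ (-p) * Real.exp (-a / x)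

section InvGammaKernel

variable {p a x : ℝ}

lemma invGammaKernel_nonneg (hx : 0 ≤ x) : 0 ≤ invGammaKernel p a x :=
  mul_nonneg (Real.rpow_nonneg hx _) (Real.exp_nonneg _)

lemma invGammaKernel_anti (hx : 0 < x) {b : ℝ} (hab : a ≤ b) :
    invGammaKernel p b x ≤ invGammaKernel p a x := by
  unfold invGammaKernel
  gcongr

@[fun_prop]
lemma measurable_invGammaKernel : Measurable (invGammaKernel p a) := by
  unfold invGammaKernel
  fun_prop

/-- The substitution `x = 1 / u` turns the kernel into the Gamma integrand `u ^ (p-2) e ^ (-a u)`. -/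
lemma invGammaKernel_eq_comp_inv (hx : 0 < x) :
    (|(-1 : ℝ)| * x ^ ((-1 : ℝ) - 1)) • ((x ^ (-1 : ℝ)) ^ (p - 2) * Real.exp (-(a * x ^ (-1 : ℝ))))
      = invGammaKernel p a x := by
  rw [invGammaKernel, smul_eq_mul, abs_neg, abs_one, one_mul, Real.rpow_neg_one,
    Real.inv_rpow hx.le, ← Real.rpow_neg hx.le, ← mul_assoc, ← Real.rpow_add hx, neg_div,
    div_eq_mul_inv a x]
  ring_nf

lemma integrableOn_invGammaKernel (hp : 1 < p) (ha : 0 < a) :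
    IntegrableOn (invGammaKernel p a) (Ioi 0) := by
  have hGamma : IntegrableOn (fun u : ℝ => u ^ (p - 2) * Real.exp (-(a * u))) (Ioi 0) := by
    simpa [Real.rpow_one, neg_mul] using
      integrableOn_rpow_mul_exp_neg_mul_rpow (by linarith : (-1 : ℝ) < p - 2) one_pos ha
  rw [← integrableOn_Ioi_comp_rpow_iff _ (by norm_num : (-1 : ℝ) ≠ 0)] at hGamma
  exact hGamma.congr_fun (fun x hx => invGammaKernel_eq_comp_inv hx) measurableSet_Ioi

lemma integral_invGammaKernel (hp : 1 < p) (ha : 0 < a) :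
    ∫ x in Ioi 0, invGammaKernel p a x = (1 / a) ^ (p - 1) * Real.Gamma (p - 1) := by
  rw [← Real.integral_rpow_mul_exp_neg_mul_Ioi (by linarith) ha, show p - 1 - 1 = p - 2 by ring,
    ← integral_comp_rpow_Ioi (fun u => u ^ (p - 2) * Real.exp (-(a * u)))
      (by norm_num : (-1 : ℝ) ≠ 0)]
  exact setIntegral_congr_fun measurableSet_Ioi fun x hx => (invGammaKernel_eq_comp_inv hx).symm

lemma hasDerivAt_invGammaKernel_param (hx : x ≠ 0) :
    HasDerivAt (fun b => invGammaKernel p b x) (-invGammaKernel (p + 1) a x) a := by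
  have h := (((hasDerivAt_id a).neg.div_const x).exp).const_mul (x ^ (-p))
  unfold invGammaKernel
  refine h.congr_deriv ?_
  rw [neg_add', Real.rpow_sub_one hx]
  simp only [id, Pi.neg_apply]
  ring

lemma hasDerivAt_invGammaKernel (hx : 0 < x) :
    HasDerivAt (invGammaKernel p a)
      (-p * invGammaKernel (p + 1) a x + a * invGammaKernel (p + 2) a x) x := by
  have h := (Real.hasDerivAt_rpow_const (p := -p) (Or.inl hx.ne')).mul
    ((hasDerivAt_inv hx.ne').const_mul (-a)).exp
  unfold invGammaKernel
  simp only [div_eq_mul_inv]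
  refine h.congr_deriv ?_
  rw [neg_add', neg_add', Real.rpow_sub_one hx.ne', show -p - 2 = -p - 1 - 1 by ring,
    Real.rpow_sub_one hx.ne', Real.rpow_sub_one hx.ne']
  field_simp

lemma tendsto_invGammaKernel_nhdsGT_zero (ha : 0 < a) :
    Tendsto (invGammaKernel p a) (𝓝[>] 0) (𝓝 0) := by
  have h := (tendsto_rpow_mul_exp_neg_mul_atTop_nhds_zero p a ha).comp tendsto_inv_nhdsGT_zero
  refine h.congr' ?_
  filter_upwards [self_mem_nhdsWithin] with x (hx : 0 < x)
  rw [Function.comp_apply, invGammaKernel, Real.inv_rpow hx.le, ← Real.rpow_neg hx.le,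
    neg_mul, neg_div, div_eq_mul_inv]

lemma tendsto_invGammaKernel_atTop (hp : 0 < p) :
    Tendsto (invGammaKernel p a) atTop (𝓝 0) := by
  have h := (tendsto_rpow_neg_atTop hp).mul
    ((Real.continuous_exp.tendsto 0).comp ((tendsto_const_nhds (x := -a)).div_atTop tendsto_id))
  rw [zero_mul] at h
  exact h

end InvGammaKernel

noncomputable def fourierIoi (g : ℝ → ℝ) (q : ℝ) : ℂ :=
  ∫ x in Ioi 0, Complex.exp (Complex.I * ((q * x : ℝ) : ℂ)) * ((g x : ℝ) : ℂ)

section FourierIoi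

variable {g : ℝ → ℝ}

lemma norm_fourierIoi_integrand (q x r : ℝ) :
    ‖Complex.exp (Complex.I * ((q * x : ℝ) : ℂ)) * (r : ℂ)‖ = |r| := by
  rw [norm_mul, Complex.norm_exp_I_mul_ofReal, one_mul, Complex.norm_real, Real.norm_eq_abs]

lemma integrableOn_fourierIoi_integrand (hg : IntegrableOn g (Ioi 0)) (q : ℝ) :
    IntegrableOn (fun x => Complex.exp (Complex.I * ((q * x : ℝ) : ℂ)) * ((g x : ℝ) : ℂ)) (Ioi 0) :=
  hg.ofReal.bdd_mul (by fun_prop)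
    (Eventually.of_forall fun x => (Complex.norm_exp_I_mul_ofReal _).le)

lemma fourierIoi_const_mul (c : ℝ) (q : ℝ) :
    fourierIoi (fun x => c * g x) q = c * fourierIoi g q := by
  rw [fourierIoi, fourierIoi, ← integral_const_mul]
  congr 1 with x
  push_cast
  ring

lemma fourierIoi_add {f : ℝ → ℝ} (hf : IntegrableOn f (Ioi 0)) (hg : IntegrableOn g (Ioi 0))
    (q : ℝ) : fourierIoi (fun x => f x + g x) q = fourierIoi f q + fourierIoi g q := by
  rw [fourierIoi, fourierIoi, fourierIoi, ← integral_add (integrableOn_fourierIoi_integrand hf q)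
    (integrableOn_fourierIoi_integrand hg q)]
  congr 1 with x
  push_cast
  ring

lemma fourierIoi_zero : fourierIoi g 0 = ((∫ x in Ioi 0, g x : ℝ) : ℂ) := by
  simp [fourierIoi, integral_complex_ofReal]

lemma fourierIoi_neg (q : ℝ) : fourierIoi g (-q) = starRingEnd ℂ (fourierIoi g q) := by
  rw [fourierIoi, fourierIoi, ← integral_conj]
  congr 1 with x
  rw [map_mul, ← Complex.exp_conj, map_mul, Complex.conj_I, Complex.conj_ofReal,
    Complex.conj_ofReal]
  push_cast
  ring_nf

lemma norm_fourierIoi_le (hg : ∀ x ∈ Ioi (0 : ℝ), 0 ≤ g x) (q : ℝ) :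
    ‖fourierIoi g q‖ ≤ ∫ x in Ioi 0, g x := by
  refine (norm_integral_le_integral_norm _).trans_eq (setIntegral_congr_fun measurableSet_Ioi ?_)
  intro x hx
  dsimp only
  rw [norm_fourierIoi_integrand, abs_of_nonneg (hg x hx)]

lemma continuous_fourierIoi (hg : IntegrableOn g (Ioi 0)) : Continuous (fourierIoi g) := by
  refine continuous_of_dominated (bound := fun x => |g x|) (fun q => ?_) (fun q => ?_) hg.abs ?_
  · exact (integrableOn_fourierIoi_integrand hg q).aestronglyMeasurable
  · exact Eventually.of_forall fun x => (norm_fourierIoi_integrand q x _).le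
  · exact Eventually.of_forall fun x => by fun_prop

lemma fourierIoi_congr {f g : ℝ → ℝ} (h : EqOn f g (Ioi 0)) (q : ℝ) :
    fourierIoi f q = fourierIoi g q :=
  setIntegral_congr_fun measurableSet_Ioi fun x hx => by rw [h hx]

lemma fourierIoi_mul_left {b : ℝ} (hb : 0 < b) (q : ℝ) :
    fourierIoi g (b * q) = fourierIoi (fun y => b⁻¹ * g (y / b)) q := by
  have h := integral_comp_mul_left_Ioi
    (fun y => Complex.exp (Complex.I * ((q * y : ℝ) : ℂ)) * ((g (y / b) : ℝ) : ℂ)) 0 hb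
  simp only [mul_zero, mul_div_cancel_left₀ _ hb.ne'] at h
  rw [fourierIoi_const_mul, fourierIoi, fourierIoi, ← Complex.real_smul, ← h]
  congr 1 with x
  ring_nf

end FourierIoi

section FourierInvGammaKernel

variable {p a : ℝ}

lemma hasDerivAt_fourierIoi_invGammaKernel (hp : 1 < p) (ha : 0 < a) (q : ℝ) :
    HasDerivAt (fun b => fourierIoi (invGammaKernel p b) q)
      (-fourierIoi (invGammaKernel (p + 1) a) q) a := by
  have hdom : ∀ᵐ x ∂volume.restrict (Ioi 0), ∀ b ∈ Metric.ball a (a / 2),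
      ‖-(Complex.exp (Complex.I * ((q * x : ℝ) : ℂ)) * ((invGammaKernel (p + 1) b x : ℝ) : ℂ))‖
        ≤ invGammaKernel (p + 1) (a / 2) x := by
    filter_upwards [ae_restrict_mem measurableSet_Ioi] with x (hx : 0 < x) b hb
    rw [norm_neg, norm_fourierIoi_integrand, abs_of_nonneg (invGammaKernel_nonneg hx.le)]
    rw [Metric.mem_ball, Real.dist_eq, abs_sub_lt_iff] at hb
    exact invGammaKernel_anti hx (by linarith)
  have hderiv : ∀ᵐ x ∂volume.restrict (Ioi 0), ∀ b ∈ Metric.ball a (a / 2),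
      HasDerivAt (fun b => Complex.exp (Complex.I * ((q * x : ℝ) : ℂ)) *
        ((invGammaKernel p b x : ℝ) : ℂ))
        (-(Complex.exp (Complex.I * ((q * x : ℝ) : ℂ)) *
          ((invGammaKernel (p + 1) b x : ℝ) : ℂ))) b := by
    filter_upwards [ae_restrict_mem measurableSet_Ioi] with x (hx : 0 < x) b _
    have h := ((hasDerivAt_invGammaKernel_param (p := p) (a := b) hx.ne').ofReal_comp).const_mul
      (Complex.exp (Complex.I * ((q * x : ℝ) : ℂ)))
    rw [Complex.ofReal_neg, mul_neg] at h
    exact h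
  have key := hasDerivAt_integral_of_dominated_loc_of_deriv_le
    (Metric.ball_mem_nhds a (half_pos ha))
    (Eventually.of_forall fun b => (by fun_prop : Measurable fun x : ℝ =>
      Complex.exp (Complex.I * ((q * x : ℝ) : ℂ)) *
        ((invGammaKernel p b x : ℝ) : ℂ)).aestronglyMeasurable)
    (integrableOn_fourierIoi_integrand (integrableOn_invGammaKernel hp ha) q)
    (by fun_prop : Measurable fun x : ℝ => -(Complex.exp (Complex.I * ((q * x : ℝ) : ℂ)) *
        ((invGammaKernel (p + 1) a x : ℝ) : ℂ))).aestronglyMeasurable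
    hdom (integrableOn_invGammaKernel (by linarith) (half_pos ha)) hderiv
  rw [fourierIoi, ← integral_neg]
  exact key.2

lemma hasDerivAt_fourierIoi_invGammaKernel_sq_half {p γ : ℝ} (hp : 1 < p) (hγ : 0 < γ) (q : ℝ) :
    HasDerivAt (fun γ => fourierIoi (invGammaKernel p (γ ^ 2 / 2)) q)
      (-(γ * fourierIoi (invGammaKernel (p + 1) (γ ^ 2 / 2)) q)) γ := by
  have hsq : HasDerivAt (fun γ : ℝ => γ ^ 2 / 2) γ γ := by
    exact ((hasDerivAt_pow 2 γ).div_const 2).congr_deriv (by norm_num)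
  have h := (hasDerivAt_fourierIoi_invGammaKernel hp (by positivity) q).scomp γ hsq
  rw [Complex.real_smul, mul_neg] at h
  exact h

/-- Integration by parts of `e ^ (i q x)` against `∂ₓ invGammaKernel p a`; no boundary terms. -/
lemma fourierIoi_invGammaKernel_recurrence (hp : 1 < p) (ha : 0 < a) (q : ℝ) :
    -p * fourierIoi (invGammaKernel (p + 1) a) q + a * fourierIoi (invGammaKernel (p + 2) a) q
      = -(Complex.I * q) * fourierIoi (invGammaKernel p a) q := by
  set u : ℝ → ℂ := fun x => Complex.exp (Complex.I * ((q * x : ℝ) : ℂ))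
  set v : ℝ → ℂ := fun x => ((invGammaKernel p a x : ℝ) : ℂ)
  have hk₁ := integrableOn_invGammaKernel (by linarith : 1 < p + 1) ha
  have hk₂ := integrableOn_invGammaKernel (by linarith : 1 < p + 2) ha
  have hu : ∀ x ∈ Ioi (0 : ℝ), HasDerivAt u (Complex.I * q * u x) x := fun x _ => by
    have h := (((hasDerivAt_id x).const_mul q).ofReal_comp.const_mul Complex.I).cexp
    simp only [id, mul_one] at h
    convert h using 1
    ring
  have hv : ∀ x ∈ Ioi (0 : ℝ), HasDerivAt v
      ((-p * invGammaKernel (p + 1) a x + a * invGammaKernel (p + 2) a x : ℝ) : ℂ) x :=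
    fun x hx => (hasDerivAt_invGammaKernel hx).ofReal_comp
  have huv' := integrableOn_fourierIoi_integrand ((hk₁.const_mul (-p)).add (hk₂.const_mul a)) q
  have hu'v := (integrableOn_fourierIoi_integrand (integrableOn_invGammaKernel hp ha) q).const_mul
    (Complex.I * q)
  have hnorm : ∀ x, ‖u x * v x‖ = |invGammaKernel p a x| := fun x => norm_fourierIoi_integrand q x _
  have h := integral_Ioi_mul_deriv_eq_deriv_mul hu hv huv'
    (IntegrableOn.congr_fun hu'v (fun x _ => by simp only [Pi.mul_apply, u, v]; ring)
      measurableSet_Ioi)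
    (squeeze_zero_norm (fun x => (hnorm x).le)
      (by simpa using (tendsto_invGammaKernel_nhdsGT_zero ha).abs))
    (squeeze_zero_norm (fun x => (hnorm x).le)
      (by simpa using (tendsto_invGammaKernel_atTop (by linarith : 0 < p)).abs))
  have hlhs : ∫ x in Ioi 0, u x * ((-p * invGammaKernel (p + 1) a x +
      a * invGammaKernel (p + 2) a x : ℝ) : ℂ) = -p * fourierIoi (invGammaKernel (p + 1) a) q +
        a * fourierIoi (invGammaKernel (p + 2) a) q := by
    rw [← fourierIoi, fourierIoi_add (hk₁.const_mul (-p)) (hk₂.const_mul a),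
      fourierIoi_const_mul, fourierIoi_const_mul]
    push_cast
    ring
  rw [← hlhs, h, sub_self, zero_sub, fourierIoi, ← integral_const_mul, ← integral_neg]
  congr 1 with x
  ring

end FourierInvGammaKernel

section SecondOrderLinearODE

lemma hasDerivAt_cexp_mul_ofReal (c : ℂ) (t : ℝ) :
    HasDerivAt (fun t : ℝ => Complex.exp (c * t)) (c * Complex.exp (c * t)) t := by
  simpa [mul_comm] using ((hasDerivAt_id (t : ℂ)).const_mul c).cexp.comp_ofReal

lemma tendsto_cexp_mul_ofReal_atTop {c : ℂ} (hc : c.re < 0) :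
    Tendsto (fun t : ℝ => Complex.exp (c * t)) atTop (𝓝 0) := by
  rw [Complex.tendsto_exp_nhds_zero_iff]
  simpa using tendsto_id.const_mul_atTop_of_neg hc

lemma eq_of_hasDerivAt_zero_Ioi {g : ℝ → ℂ} (hg : ∀ t ∈ Ioi (0 : ℝ), HasDerivAt g 0 t) {s t : ℝ}
    (hs : 0 < s) (ht : 0 < t) : g s = g t :=
  isOpen_Ioi.is_const_of_deriv_eq_zero isPreconnected_Ioi
    (fun x hx => (hg x hx).differentiableAt.differentiableWithinAt)
    (fun x hx => (hg x hx).deriv) hs ht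

variable {f f' : ℝ → ℂ} {l : ℂ}

lemma exists_eq_cexp_add_cexp (hl : l ≠ 0) (hf : ∀ t ∈ Ioi 0, HasDerivAt f (f' t) t)
    (hf' : ∀ t ∈ Ioi 0, HasDerivAt f' (l ^ 2 * f t) t) :
    ∃ A B : ℂ, ∀ t ∈ Ioi (0 : ℝ),
      f t = A * Complex.exp (-l * t) + B * Complex.exp (l * t) := by
  have hexp_neg (t : ℝ) : Complex.exp (l * t) * Complex.exp (-l * t) = 1 := by
    rw [← Complex.exp_add, ← add_mul, add_neg_cancel, zero_mul, Complex.exp_zero]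
  have hexp_two (t : ℝ) : Complex.exp (2 * l * t) = Complex.exp (l * t) * Complex.exp (l * t) := by
    rw [← Complex.exp_add]
    ring_nf
  obtain ⟨B, hB⟩ : ∃ B, ∀ t ∈ Ioi (0 : ℝ), (f' t + l * f t) * Complex.exp (-l * t) = B := by
    refine ⟨_, fun t ht => eq_of_hasDerivAt_zero_Ioi
      (g := fun t => (f' t + l * f t) * Complex.exp (-l * t)) (fun s hs => ?_) ht one_pos⟩
    refine (((hf' s hs).add ((hf s hs).const_mul l)).mul
      (hasDerivAt_cexp_mul_ofReal (-l) s)).congr_deriv ?_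
    simp only [Pi.add_apply]
    ring
  obtain ⟨A, hA⟩ : ∃ A, ∀ t ∈ Ioi (0 : ℝ),
      f t * Complex.exp (l * t) - B / (2 * l) * Complex.exp (2 * l * t) = A := by
    refine ⟨_, fun t ht => eq_of_hasDerivAt_zero_Ioi (g := fun t =>
      f t * Complex.exp (l * t) - B / (2 * l) * Complex.exp (2 * l * t))
      (fun s hs => ?_) ht one_pos⟩
    refine (((hf s hs).mul (hasDerivAt_cexp_mul_ofReal l s)).sub
      ((hasDerivAt_cexp_mul_ofReal (2 * l) s).const_mul _)).congr_deriv ?_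
    have h2l : B / (2 * l) * (2 * l) = B := div_mul_cancel₀ _ (mul_ne_zero two_ne_zero hl)
    linear_combination -Complex.exp (2 * l * s) * h2l + Complex.exp (2 * l * s) * hB s hs -
      (f' s + l * f s) * Complex.exp (l * s) * hexp_neg s -
      (f' s + l * f s) * Complex.exp (-l * s) * hexp_two s
  refine ⟨A, B / (2 * l), fun t ht => ?_⟩
  linear_combination Complex.exp (-l * t) * hA t ht +
    (B / (2 * l) * Complex.exp (l * t) - f t) * hexp_neg t +
    B / (2 * l) * Complex.exp (-l * t) * hexp_two t

lemma eq_cexp_neg_mul_of_bounded (hl : 0 < l.re) (hf : ∀ t ∈ Ioi 0, HasDerivAt f (f' t) t)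
    (hf' : ∀ t ∈ Ioi 0, HasDerivAt f' (l ^ 2 * f t) t) {C : ℝ}
    (hbdd : ∀ t ∈ Ioi (0 : ℝ), ‖f t‖ ≤ C) (h0 : Tendsto f (𝓝[>] 0) (𝓝 1)) {t : ℝ} (ht : 0 < t) :
    f t = Complex.exp (-l * t) := by
  obtain ⟨A, B, hAB⟩ := exists_eq_cexp_add_cexp (fun h => by simp [h] at hl) hf hf'
  have hdecay : Tendsto (fun t : ℝ => Complex.exp (-l * t)) atTop (𝓝 0) :=
    tendsto_cexp_mul_ofReal_atTop (by simpa using hl)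
  have hB : B = 0 := by
    have hvanish : Tendsto (fun t : ℝ => f t * Complex.exp (-l * t)) atTop (𝓝 0) := by
      have hbound := hdecay.norm.const_mul C
      rw [norm_zero, mul_zero] at hbound
      refine squeeze_zero_norm' ?_ hbound
      filter_upwards [eventually_gt_atTop 0] with t ht
      rw [norm_mul]
      exact mul_le_mul_of_nonneg_right (hbdd t ht) (norm_nonneg _)
    have hB : Tendsto (fun t : ℝ => f t * Complex.exp (-l * t)) atTop (𝓝 B) := by
      have h := ((tendsto_cexp_mul_ofReal_atTop (c := -(2 * l)) (by simpa using hl)).const_mul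
        A).add_const B
      rw [mul_zero, zero_add] at h
      refine h.congr' ?_
      filter_upwards [eventually_gt_atTop 0] with t ht
      rw [hAB t ht, add_mul, mul_assoc, mul_assoc, ← Complex.exp_add, ← Complex.exp_add]
      ring_nf
      simp
    exact tendsto_nhds_unique hB hvanish
  have hA : A = 1 := by
    have hcont : Continuous fun t : ℝ => A * Complex.exp (-l * t) := by fun_prop
    have h := (hcont.tendsto 0).mono_left (nhdsWithin_le_nhds (s := Ioi 0))
    simp only [Complex.ofReal_zero, mul_zero, Complex.exp_zero, mul_one] at h
    refine tendsto_nhds_unique (h.congr' ?_) h0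
    filter_upwards [self_mem_nhdsWithin] with t ht
    rw [hAB t ht, hB, zero_mul, add_zero]
  rw [hAB t ht, hA, hB, one_mul, zero_mul, add_zero]

end SecondOrderLinearODE

section LevyDensity

variable {γ : ℝ}

lemma levyDensity_zero_eq (γ x : ℝ) :
    levyDensity γ 0 x = γ / Real.sqrt (2 * Real.pi) * invGammaKernel (3 / 2) (γ ^ 2 / 2) x := by
  rw [levyDensity, invGammaKernel, sub_zero]
  simp only [neg_div, div_div]
  ring

lemma integrableOn_levyDensity_zero (hγ : 0 < γ) : IntegrableOn (levyDensity γ 0) (Ioi 0) := by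
  rw [show levyDensity γ 0 = _ from funext (levyDensity_zero_eq γ)]
  exact (integrableOn_invGammaKernel (by norm_num) (by positivity)).const_mul _

lemma integral_levyDensity_zero (hγ : 0 < γ) : ∫ x in Ioi 0, levyDensity γ 0 x = 1 := by
  simp only [levyDensity_zero_eq]
  rw [integral_const_mul, integral_invGammaKernel (by norm_num) (by positivity),
    show (3 / 2 - 1 : ℝ) = 1 / 2 by norm_num, Real.Gamma_one_half_eq, ← Real.sqrt_eq_rpow,
    Real.sqrt_mul zero_le_two, one_div_div, Real.sqrt_div' _ (sq_nonneg γ), Real.sqrt_sq hγ.le]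
  have : 0 < Real.sqrt Real.pi := Real.sqrt_pos.2 Real.pi_pos
  field_simp

lemma levyDensity_zero_nonneg (hγ : 0 < γ) {x : ℝ} (hx : 0 < x) : 0 ≤ levyDensity γ 0 x := by
  rw [levyDensity_zero_eq]
  exact mul_nonneg (by positivity) (invGammaKernel_nonneg hx.le)

lemma levyDensity_zero_eq_scale (hγ : 0 < γ) {x : ℝ} (hx : 0 < x) :
    levyDensity γ 0 x = (γ ^ 2)⁻¹ * levyDensity 1 0 (x / γ ^ 2) := by
  simp only [levyDensity_zero_eq, invGammaKernel]
  have hγ3 : (γ ^ 2) ^ (3 / 2 : ℝ) = γ ^ 3 := by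
    rw [← Real.rpow_natCast γ 2, ← Real.rpow_mul hγ.le]
    norm_num
  rw [Real.div_rpow hx.le (by positivity), Real.rpow_neg (by positivity : (0:ℝ) ≤ γ ^ 2), hγ3,
    show -(1 ^ 2 / 2) / (x / γ ^ 2) = -(γ ^ 2 / 2) / x by field_simp]
  field_simp

lemma fourierIoi_levyDensity_zero_eq_scale (hγ : 0 < γ) (q : ℝ) :
    fourierIoi (levyDensity γ 0) q = fourierIoi (levyDensity 1 0) (γ ^ 2 * q) := by
  rw [fourierIoi_mul_left (by positivity)]
  exact fourierIoi_congr (fun x hx => levyDensity_zero_eq_scale hγ hx) q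

lemma tendsto_fourierIoi_levyDensity_zero (q : ℝ) :
    Tendsto (fun γ => fourierIoi (levyDensity γ 0) q) (𝓝[>] 0) (𝓝 1) := by
  have hcont : Continuous fun γ : ℝ => fourierIoi (levyDensity 1 0) (γ ^ 2 * q) :=
    (continuous_fourierIoi (integrableOn_levyDensity_zero one_pos)).comp (by fun_prop)
  have h := hcont.tendsto 0
  simp only [ne_eq, OfNat.ofNat_ne_zero, not_false_eq_true, zero_pow, zero_mul, fourierIoi_zero,
    integral_levyDensity_zero one_pos, Complex.ofReal_one] at h
  refine (h.mono_left nhdsWithin_le_nhds).congr' ?_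
  filter_upwards [self_mem_nhdsWithin] with γ hγ
  exact (fourierIoi_levyDensity_zero_eq_scale hγ q).symm

end LevyDensity

section CharacteristicFunction

variable {γ : ℝ}

lemma hasDerivAt_ofReal_mul_fourierIoi_invGammaKernel (hγ : 0 < γ) (q : ℝ) :
    HasDerivAt (fun γ : ℝ => (γ : ℂ) * fourierIoi (invGammaKernel (3 / 2) (γ ^ 2 / 2)) q)
      (fourierIoi (invGammaKernel (3 / 2) (γ ^ 2 / 2)) q -
        γ ^ 2 * fourierIoi (invGammaKernel (5 / 2) (γ ^ 2 / 2)) q) γ := by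
  have h := hasDerivAt_fourierIoi_invGammaKernel_sq_half (p := 3 / 2) (by norm_num) hγ q
  norm_num at h
  refine ((hasDerivAt_id γ).ofReal_comp.mul h).congr_deriv ?_
  simp only [id, Complex.ofReal_one]
  ring

lemma hasDerivAt_fourierIoi_invGammaKernel_sub (hγ : 0 < γ) (q : ℝ) :
    HasDerivAt (fun γ : ℝ => fourierIoi (invGammaKernel (3 / 2) (γ ^ 2 / 2)) q -
        γ ^ 2 * fourierIoi (invGammaKernel (5 / 2) (γ ^ 2 / 2)) q)
      (-2 * Complex.I * q * (γ * fourierIoi (invGammaKernel (3 / 2) (γ ^ 2 / 2)) q)) γ := by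
  have h₁ := hasDerivAt_fourierIoi_invGammaKernel_sq_half (p := 3 / 2) (by norm_num) hγ q
  have h₂ := hasDerivAt_fourierIoi_invGammaKernel_sq_half (p := 5 / 2) (by norm_num) hγ q
  have hrec := fourierIoi_invGammaKernel_recurrence (p := 3 / 2) (a := γ ^ 2 / 2) (by norm_num)
    (by positivity) q
  norm_num at h₁ h₂ hrec
  refine (h₁.sub (((hasDerivAt_id γ).ofReal_comp.pow 2).mul h₂)).congr_deriv ?_
  simp only [id, Pi.pow_apply, Complex.ofReal_one]
  linear_combination (2 * γ) * hrec

lemma fourierIoi_levyDensity_zero_of_pos (hγ : 0 < γ) {q : ℝ} (hq : 0 < q) :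
    fourierIoi (levyDensity γ 0) q = Complex.exp (-(Real.sqrt q * (1 - Complex.I)) * γ) := by
  set c : ℂ := (((Real.sqrt (2 * Real.pi))⁻¹ : ℝ) : ℂ)
  set l : ℂ := Real.sqrt q * (1 - Complex.I)
  have hl : l ^ 2 = -2 * Complex.I * q := by
    have hsq : ((Real.sqrt q : ℝ) : ℂ) ^ 2 = q := by exact_mod_cast Real.sq_sqrt hq.le
    linear_combination (1 - Complex.I) ^ 2 * hsq + q * Complex.I_sq
  have hΦ (γ : ℝ) : fourierIoi (levyDensity γ 0) q =
      c * (γ * fourierIoi (invGammaKernel (3 / 2) (γ ^ 2 / 2)) q) := by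
    rw [show levyDensity γ 0 = _ from funext (levyDensity_zero_eq γ), fourierIoi_const_mul,
      div_eq_inv_mul, Complex.ofReal_mul]
    ring
  refine (hΦ γ).trans (eq_cexp_neg_mul_of_bounded (l := l) (C := 1) ?_
    (fun γ hγ => (hasDerivAt_ofReal_mul_fourierIoi_invGammaKernel hγ q).const_mul c)
    (fun γ hγ => ((hasDerivAt_fourierIoi_invGammaKernel_sub hγ q).const_mul c).congr_deriv ?_)
    (fun γ hγ => ?_) ((tendsto_fourierIoi_levyDensity_zero q).congr hΦ) hγ)
  · simp [l, Real.sqrt_pos.2 hq]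
  · rw [hl]
    ring
  · rw [← hΦ γ, ← integral_levyDensity_zero hγ]
    exact norm_fourierIoi_le (fun x hx => levyDensity_zero_nonneg hγ hx) q

lemma fourierIoi_levyDensity_zero (hγ : 0 < γ) (q : ℝ) :
    fourierIoi (levyDensity γ 0) q = Complex.exp (-(((γ * |q| ^ ((1 : ℝ) / 2) : ℝ) : ℂ) *
      (1 - Complex.I * ((Real.sign q : ℝ) : ℂ)))) := by
  rcases lt_trichotomy q 0 with hq | rfl | hq
  · obtain ⟨r, hr, rfl⟩ : ∃ r, 0 < r ∧ q = -r := ⟨-q, by linarith, by ring⟩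
    rw [fourierIoi_neg, fourierIoi_levyDensity_zero_of_pos hγ hr, ← Complex.exp_conj,
      Real.sign_of_neg hq, abs_neg, abs_of_pos hr, ← Real.sqrt_eq_rpow]
    simp only [map_mul, map_neg, map_sub, map_one, Complex.conj_I, Complex.conj_ofReal]
    push_cast
    ring_nf
  · simp [fourierIoi_zero, integral_levyDensity_zero hγ]
  · rw [fourierIoi_levyDensity_zero_of_pos hγ hq, Real.sign_of_pos hq, abs_of_pos hq,
      ← Real.sqrt_eq_rpow]
    push_cast
    ring_nf

end CharacteristicFunction

end Levy

theorem stmt19 (γ μ : ℝ) (hγ : 0 < γ) :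
    (∫ x in Set.Ioi μ, levyDensity γ μ x = 1) ∧
    ∀ q : ℝ,
      ∫ x in Set.Ioi μ, Complex.exp (Complex.I * ((q * x : ℝ) : ℂ)) *
          ((levyDensity γ μ x : ℝ) : ℂ) =
        Complex.exp (Complex.I * ((μ * q : ℝ) : ℂ) -
          ((γ * |q| ^ ((1 : ℝ) / 2) : ℝ) : ℂ) * (1 - Complex.I * ((Real.sign q : ℝ) : ℂ))) := by
  have hshift (x : ℝ) : levyDensity γ μ (x + μ) = levyDensity γ 0 x := by
    simp [levyDensity]
  refine ⟨?_, fun q => ?_⟩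
  · simp only [Levy.setIntegral_Ioi_eq_comp_add _ μ, hshift, Levy.integral_levyDensity_zero hγ]
  · rw [Levy.setIntegral_Ioi_eq_comp_add _ μ, sub_eq_add_neg, Complex.exp_add,
      ← Levy.fourierIoi_levyDensity_zero hγ, Levy.fourierIoi, ← integral_const_mul]
    congr 1 with x
    rw [hshift, ← mul_assoc, ← Complex.exp_add]
    push_cast
    ring_nf
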